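/- Let G be a graph on m ≥ 3 vertices with minimum degree at least (m+1)/2. Then G is Hamilton-connected: for every pair of distinct vertices u, v there is a Hamilton path in G with endpoints u and v. -/

import Mathlib

/-!
Add to `G` a new vertex adjacent exactly to `u` and `v`: Hamiltonian cycles of the enlarged graph
`H` on `n = |V| + 1` vertices are Hamiltonian `u`–`v` paths of `G` closed up through the new vertex.
Two non-adjacent old vertices have degree sum at least `n` in `H`, so by Ore's rotation argument
adding the edge between them does not change whether `H` is Hamiltonian (Bondy–Chvátal closure).
Adding all such edges produces the same construction over the complete graph, which is clearly
Hamiltonian. The rotation: if `P` is a Hamiltonian `a`–`b` path with `deg a + deg b ≥ n`, pigeonhole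
on the `n - 1` edges of `P` yields an edge `xy` of `P` with `a ~ y` and `b ~ x`, and
`a → y → ⋯ → b → x → ⋯ → a` is a Hamiltonian cycle.
-/

open Finset

namespace SimpleGraph

variable {V : Type*} {G : SimpleGraph V}

namespace Walk

lemma IsPath.cons_isCycle_of_two_le_length {u v : V} {p : G.Walk v u} (hp : p.IsPath)
    (h : G.Adj u v) (hlen : 2 ≤ p.length) : (cons h p).IsCycle := by
  rw [isCycle_iff_isPath_tail_and_le_length]
  exact ⟨by simpa using hp, by simpa using hlen⟩

lemma exists_support_map_eq_of_subset_range {W : Type*} {H : SimpleGraph W} (f : G ↪g H)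
    {x' y' : W} (p : H.Walk x' y') (hp : ∀ z ∈ p.support, z ∈ Set.range f) {x y : V}
    (hx : f x = x') (hy : f y = y') : ∃ q : G.Walk x y, q.support.map f = p.support := by
  induction p generalizing x with
  | nil =>
    obtain rfl := f.injective (hx.trans hy.symm)
    exact ⟨.nil, by simp [hx]⟩
  | cons h p ih =>
    subst hx
    obtain ⟨w, rfl⟩ := hp _ (List.mem_cons_of_mem _ p.start_mem_support)
    obtain ⟨q, hq⟩ := ih (fun z hz => hp z (List.mem_cons_of_mem _ hz)) rfl hy
    exact ⟨.cons (f.map_adj_iff.1 h) q, by simp [hq]⟩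

variable [DecidableEq V]

lemma IsHamiltonian.reverse {a b : V} {p : G.Walk a b} (hp : p.IsHamiltonian) :
    p.reverse.IsHamiltonian := by
  simpa [IsHamiltonian] using hp

lemma IsHamiltonian.ne [Nontrivial V] {a b : V} {p : G.Walk a b} (hp : p.IsHamiltonian) :
    a ≠ b := by
  rintro rfl
  obtain rfl := eq_nil_iff_nil.2 (isPath_iff_nil.1 hp.isPath)
  obtain ⟨z, hz⟩ := exists_ne a
  have := hp z
  simp [hz.symm] at this

lemma IsHamiltonian.transfer {H : SimpleGraph V} {a b : V} {p : G.Walk a b}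
    (hp : p.IsHamiltonian) (h : ∀ e ∈ p.edges, e ∈ H.edgeSet) :
    (p.transfer H h).IsHamiltonian := by
  simpa [IsHamiltonian] using hp

lemma IsHamiltonianCycle.transfer [Fintype V] {H : SimpleGraph V} {a : V} {p : G.Walk a a}
    (hp : p.IsHamiltonianCycle) (h : ∀ e ∈ p.edges, e ∈ H.edgeSet) :
    (p.transfer H h).IsHamiltonianCycle := by
  rw [isHamiltonianCycle_iff_isCycle_and_length_eq] at hp ⊢
  exact ⟨hp.1.transfer h, by simpa using hp.2⟩

lemma IsHamiltonianCycle.exists_isHamiltonian_not_mem_edges {x : V} {c : G.Walk x x}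
    (hc : c.IsHamiltonianCycle) {d : G.Dart} (hd : d ∈ c.darts) :
    ∃ p : G.Walk d.snd d.fst, p.IsHamiltonian ∧ d.edge ∉ p.edges := by
  obtain ⟨T, R, rfl⟩ := (isSubwalk_toWalk_adj_iff_mem_darts c).2 hd
  have hcount := (isHamiltonianCycle_iff_isCycle_and_support_count_tail_eq_one.1 hc).2
  have hedges := hc.edges_nodup
  simp only [tail_support_append, Adj.support_toWalk, List.tail_cons, edges_append,
    Adj.edges_toWalk] at hcount hedges
  refine ⟨R.append T, fun z => ?_, ?_⟩
  · rw [support_append, ← R.cons_tail_support, ← hcount z]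
    simp only [List.count_append, List.count_cons, List.count_nil, List.cons_append]
    omega
  · rw [edges_append, List.mem_append, or_comm, ← List.mem_append]
    rw [List.append_assoc, List.singleton_append, List.nodup_middle, List.nodup_cons] at hedges
    exact hedges.1

variable [Fintype V] [DecidableRel G.Adj]

lemma exists_mem_darts_adj_snd_and_adj_fst {a b : V} (p : G.Walk a b) (hp : ∀ w, w ∈ p.support)
    (hlen : p.length < G.degree a + G.degree b) :
    ∃ d ∈ p.darts, G.Adj a d.snd ∧ G.Adj b d.fst := by
  set A := p.darts.toFinset.filter (G.Adj a ·.snd)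
  set B := p.darts.toFinset.filter (G.Adj b ·.fst)
  have hA : G.degree a ≤ #A := by
    refine card_neighborFinset_eq_degree G a ▸ card_le_card_of_surjOn (·.snd) fun w hw => ?_
    rw [mem_coe, mem_neighborFinset] at hw
    have : w ∈ p.darts.map (·.snd) := by
      rw [map_snd_darts]
      exact ((mem_support_iff p).1 (hp w)).resolve_left hw.ne'
    obtain ⟨d, hd, rfl⟩ := List.mem_map.1 this
    exact ⟨d, by simp [A, hd, hw], rfl⟩
  have hB : G.degree b ≤ #B := by
    refine card_neighborFinset_eq_degree G b ▸ card_le_card_of_surjOn (·.fst) fun w hw => ?_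
    rw [mem_coe, mem_neighborFinset] at hw
    have : w ∈ p.darts.map (·.fst) := by
      have := hp w
      rw [← map_fst_darts_append, List.mem_append, List.mem_singleton] at this
      exact this.resolve_right hw.ne'
    obtain ⟨d, hd, rfl⟩ := List.mem_map.1 this
    exact ⟨d, by simp [B, hd, hw], rfl⟩
  have hAB : #(A ∪ B) ≤ p.length :=
    (card_le_card (union_subset (filter_subset _ _) (filter_subset _ _))).trans
      ((List.toFinset_card_le _).trans_eq (length_darts p))
  obtain ⟨d, hd⟩ : (A ∩ B).Nonempty := by
    rw [← card_pos]
    have := card_union_add_card_inter A B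
    omega
  simp only [A, B, mem_inter, mem_filter, List.mem_toFinset] at hd
  exact ⟨d, hd.1.1, hd.1.2, hd.2.2⟩

theorem IsHamiltonian.isHamiltonian_of_not_adj {a b : V} {p : G.Walk a b} (hp : p.IsHamiltonian)
    (hab : ¬G.Adj a b) (hdeg : Fintype.card V ≤ G.degree a + G.degree b) : G.IsHamiltonian := by
  have hcard : 0 < Fintype.card V := Fintype.card_pos_iff.2 ⟨a⟩
  obtain ⟨d, hd, had, hbd⟩ := p.exists_mem_darts_adj_snd_and_adj_fst hp.mem_support
    (by rw [hp.length_eq]; omega)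
  obtain ⟨T, R, rfl⟩ := (isSubwalk_toWalk_adj_iff_mem_darts p).2 hd
  have hT : T.length ≠ 0 := fun h => hab (eq_of_length_eq_zero h ▸ hbd).symm
  have hR : R.length ≠ 0 := fun h => hab (eq_of_length_eq_zero h ▸ had)
  have hlen := hp.length_eq
  simp only [length_append, Adj.length_toWalk] at hlen
  have hnodup := hp.isPath.support_nodup
  simp only [support_append, Adj.support_toWalk, List.tail_cons] at hnodup
  intro _
  refine ⟨a, cons had (R.append (cons hbd T.reverse)), ?_⟩
  rw [isHamiltonianCycle_iff_isCycle_and_length_eq]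
  refine ⟨IsPath.cons_isCycle_of_two_le_length ?_ had (by simp; omega), by simp; omega⟩
  rw [isPath_def, support_append, support_cons, List.tail_cons, support_reverse]
  refine (List.perm_iff_count.2 fun x => ?_).nodup_iff.1 hnodup
  rw [← R.cons_tail_support]
  simp only [List.count_append, List.count_cons, List.count_reverse, List.count_nil,
    List.tail_cons]
  omega

end Walk

lemma mem_edgeSet_of_mem_edgeSet_sup_edge {a b : V} {e : Sym2 V}
    (he : e ∈ (G ⊔ edge a b).edgeSet) (hne : e ≠ s(a, b)) : e ∈ G.edgeSet := by
  simp_all [edgeSet_sup]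

section Closure

variable [DecidableEq V] [Fintype V] [DecidableRel G.Adj]

theorem IsHamiltonian.of_sup_edge {a b : V} (hab : ¬G.Adj a b)
    (hdeg : Fintype.card V ≤ G.degree a + G.degree b) (h : (G ⊔ edge a b).IsHamiltonian) :
    G.IsHamiltonian := by
  intro hV
  obtain ⟨x, c, hc⟩ := h hV
  by_cases hmem : s(a, b) ∈ c.edges
  · obtain ⟨d, hd, hde⟩ := List.mem_map.1 hmem
    obtain ⟨p, hp, hpe⟩ := hc.exists_isHamiltonian_not_mem_edges hd
    have hpG : ∀ e ∈ p.edges, e ∈ G.edgeSet := fun e he =>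
      mem_edgeSet_of_mem_edgeSet_sup_edge (p.edges_subset_edgeSet he)
        (hde ▸ ne_of_mem_of_not_mem he hpe)
    refine (hp.transfer hpG).isHamiltonian_of_not_adj ?_ ?_ hV
    · rcases Sym2.eq_iff.1 hde with ⟨h1, h2⟩ | ⟨h1, h2⟩ <;> simp_all [adj_comm]
    · rcases Sym2.eq_iff.1 hde with ⟨h1, h2⟩ | ⟨h1, h2⟩ <;> rw [h1, h2] <;> omega
  · exact ⟨x, c.transfer G fun e he => mem_edgeSet_of_mem_edgeSet_sup_edge
      (c.edges_subset_edgeSet he) (ne_of_mem_of_not_mem he hmem), hc.transfer _⟩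

theorem IsHamiltonian.of_le_of_forall_card_le_degree_add_degree {K : SimpleGraph V} (hGK : G ≤ K)
    (hdeg : ∀ a b, K.Adj a b → ¬G.Adj a b → Fintype.card V ≤ G.degree a + G.degree b)
    (hK : K.IsHamiltonian) : G.IsHamiltonian := by
  classical
  suffices ∀ H, G ≤ H → H ≤ K → H.IsHamiltonian from this G le_rfl hGK
  intro H
  induction H using WellFoundedGT.induction with | _ H ih
  intro hGH hHK
  obtain rfl | hlt := hHK.eq_or_lt
  · exact hK
  obtain ⟨a, b, hKab, hab⟩ : ∃ a b, K.Adj a b ∧ ¬H.Adj a b := by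
    by_contra! h
    exact hlt.not_ge fun a b => h a b
  refine IsHamiltonian.of_sup_edge hab ?_ (ih _ (lt_sup_edge _ _ _ hKab.ne hab)
    (hGH.trans le_sup_left) (sup_le hHK ((edge_le_iff _).2 (Or.inr hKab))))
  have := hdeg a b hKab fun h => hab (hGH h)
  have := degree_le_of_le (v := a) hGH
  have := degree_le_of_le (v := b) hGH
  omega

end Closure

lemma exists_isHamiltonian_top [DecidableEq V] [Fintype V] {u v : V} (huv : u ≠ v) :
    ∃ p : (⊤ : SimpleGraph V).Walk u v, p.IsHamiltonian := by
  set l := u :: (((univ.erase u).erase v).toList ++ [v])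
  have hl : l.Nodup := by simp_all [l, List.nodup_append, Finset.nodup_toList]
  have hchain : l.IsChain (⊤ : SimpleGraph V).Adj := (hl.imp fun h => h).isChain
  refine ⟨(Walk.ofSupport l (List.cons_ne_nil _ _) hchain).copy (List.head_cons ..)
    (by simp [l]), fun z => ?_⟩
  rw [Walk.support_copy, Walk.support_ofSupport]
  exact List.count_eq_one_of_mem hl (by simp [l]; tauto)

def addVertex (G : SimpleGraph V) (u v : V) : SimpleGraph (Option V) where
  Adj
    | some a, some b => G.Adj a b
    | some a, none | none, some a => a = u ∨ a = v
    | none, none => False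
  symm := ⟨by rintro (_ | a) (_ | b) h <;> first | exact h | exact h.symm⟩
  loopless := ⟨by rintro (_ | a) h <;> first | exact h | exact G.loopless.irrefl a h⟩

section AddVertex

variable {G' : SimpleGraph V} {u v : V}

@[simp] lemma addVertex_adj_none_some {a : V} :
    (G.addVertex u v).Adj none (some a) ↔ a = u ∨ a = v := Iff.rfl

@[simp] lemma addVertex_adj_some_none {a : V} :
    (G.addVertex u v).Adj (some a) none ↔ a = u ∨ a = v := Iff.rfl

def embeddingAddVertex (G : SimpleGraph V) (u v : V) : G ↪g G.addVertex u v :=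
  ⟨Function.Embedding.some, Iff.rfl⟩

@[simp] lemma embeddingAddVertex_apply (a : V) : G.embeddingAddVertex u v a = some a := rfl

lemma addVertex_mono (h : G ≤ G') : G.addVertex u v ≤ G'.addVertex u v := by
  rintro (_ | a) (_ | b) hab
  exacts [hab, hab, hab, h hab]

variable [DecidableEq V] [Fintype V]

lemma Walk.IsHamiltonian.isHamiltonian_addVertex {p : G.Walk u v} (hp : p.IsHamiltonian)
    (huv : u ≠ v) : (G.addVertex u v).IsHamiltonian := by
  intro _
  have hu : (G.addVertex u v).Adj none (G.embeddingAddVertex u v u) := by simp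
  have hv : (G.addVertex u v).Adj (G.embeddingAddVertex u v v) none := by simp
  have hpath : ((p.map (G.embeddingAddVertex u v).toHom).concat hv).IsPath :=
    (hp.isPath.map (G.embeddingAddVertex u v).injective).concat (by rw [Walk.support_map]; simp) _
  have := hp.length_eq
  have : p.length ≠ 0 := fun h => huv (p.eq_of_length_eq_zero h)
  have := Fintype.card_pos_iff.2 ⟨u⟩
  refine ⟨none, .cons hu _, Walk.isHamiltonianCycle_iff_isCycle_and_length_eq.2
    ⟨hpath.cons_isCycle_of_two_le_length _ ?_, ?_⟩⟩
  · simp only [Walk.length_concat, Walk.length_map]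
    omega
  · simp only [Walk.length_cons, Walk.length_concat, Walk.length_map, Fintype.card_option]
    omega

lemma exists_isHamiltonian_of_isHamiltonian_addVertex (huv : u ≠ v)
    (h : (G.addVertex u v).IsHamiltonian) : ∃ p : G.Walk u v, p.IsHamiltonian := by
  have : Nontrivial V := ⟨u, v, huv⟩
  obtain ⟨c, hc⟩ := h.exists_isHamiltonianCycle none
  have hcount := (Walk.isHamiltonianCycle_iff_isCycle_and_support_count_tail_eq_one.1 hc).2
  cases c with
  | nil => exact absurd hc.isCycle Walk.not_isCycle_nil
  | @cons _ x _ hx q =>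
  obtain ⟨y, hy, r, hr⟩ := Walk.not_nil_iff.1 (q.reverse.not_nil_of_ne hx.ne)
  have hq : q.reverse.IsHamiltonian := Walk.IsHamiltonian.reverse fun z => by simpa using hcount z
  rw [hr] at hq
  obtain ⟨hr, hnone⟩ := (Walk.cons_isPath_iff _ _).1 hq.isPath
  obtain ⟨x, rfl⟩ := Option.ne_none_iff_exists'.1 hx.ne.symm
  obtain ⟨y, rfl⟩ := Option.ne_none_iff_exists'.1 hy.ne.symm
  obtain ⟨p, hpr⟩ := r.exists_support_map_eq_of_subset_range (G.embeddingAddVertex u v)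
    (fun z hz => Option.ne_none_iff_exists.1 (ne_of_mem_of_not_mem hz hnone)) rfl rfl
  have hp : p.IsHamiltonian := by
    refine Walk.isHamiltonian_iff_isPath_and_length_eq.2
      ⟨(Walk.isPath_def _).2 (List.Nodup.of_map _ (hpr ▸ hr.support_nodup)), ?_⟩
    have := congrArg List.length hpr
    have := hq.length_eq
    simp only [List.length_map, Walk.length_support, Walk.length_cons, Fintype.card_option] at *
    omega
  rcases hx with rfl | rfl <;> rcases hy with rfl | rfl
  exacts [absurd rfl hp.ne, ⟨p.reverse, hp.reverse⟩, ⟨p, hp⟩, absurd rfl hp.ne]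

theorem exists_isHamiltonian_of_forall_card_lt_degree_add_degree [DecidableRel G.Adj]
    (huv : u ≠ v)
    (hdeg : ∀ a b, a ≠ b → ¬G.Adj a b → Fintype.card V < G.degree a + G.degree b) :
    ∃ p : G.Walk u v, p.IsHamiltonian := by
  classical
  obtain ⟨p, hp⟩ := exists_isHamiltonian_top huv
  refine exists_isHamiltonian_of_isHamiltonian_addVertex huv
    (IsHamiltonian.of_le_of_forall_card_le_degree_add_degree (addVertex_mono le_top) ?_
      (hp.isHamiltonian_addVertex huv))
  rintro (_ | a) (_ | b) hK hG
  iterate 3 exact absurd hK hG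
  have ha : G.degree a ≤ (G.addVertex u v).degree (some a) :=
    (G.embeddingAddVertex u v).toCopy.degree_le a
  have hb : G.degree b ≤ (G.addVertex u v).degree (some b) :=
    (G.embeddingAddVertex u v).toCopy.degree_le b
  have := hdeg a b hK hG
  rw [Fintype.card_option]
  omega

end AddVertex

end SimpleGraph

theorem stmt18_general {V : Type*} [Fintype V] [DecidableEq V] (G : SimpleGraph V) [DecidableRel G.Adj]
    (hdeg : ∀ v, ((Fintype.card V : ℝ) + 1) / 2 ≤ G.degree v) :
    ∀ u v : V, u ≠ v → ∃ p : G.Walk u v, p.IsHamiltonian := by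
  intro u v huv
  refine SimpleGraph.exists_isHamiltonian_of_forall_card_lt_degree_add_degree huv
    fun a b _ _ => ?_
  have := hdeg a
  have := hdeg b
  exact_mod_cast (by linarith : (Fintype.card V : ℝ) < G.degree a + G.degree b)

/-- Ore: If `G` has `m ≥ 3` vertices and minimum degree at least
`(m+1)/2`, then `G` is Hamilton-connected. -/
theorem stmt18 {V : Type*} [Fintype V] [DecidableEq V] (G : SimpleGraph V) [DecidableRel G.Adj]
    (hm : 3 ≤ Fintype.card V)
    (hdeg : ∀ v, ((Fintype.card V : ℝ) + 1) / 2 ≤ G.degree v) :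
    ∀ u v : V, u ≠ v → ∃ p : G.Walk u v, p.IsHamiltonian :=
  stmt18_general G hdeg
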